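/- For the class of directed rooted trees with exactly k-1 leaves, dissemination completes within k(n-3)+2 rounds. -/

import Mathlib

/-!
Follow a strict covering `I` together with the potential `Φ`: the total size of the `k` smallest
influence sets of members of `I`, missing members counting as `n - 1`. At time `1` the non-leaves
cover `Π` with influence sets of size at least `2`, so `Φ ≥ 2k`. In a tree round, an influence set
that does not grow is closed under the round's edges; hence the member covering the root grows, and
distinct stalled members own distinct leaves, so fewer than `k` members stall and `Φ` increases.
The family still covers after the round, and shrinking it to a strict covering does not decrease
`Φ`. As `Φ ≤ k(n - 1)` while no influence set is full, some set is full by time `k(n - 3) + 2`.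
-/

/-- Influence sets: `influence G p r` is the set of processes that know
about `p` at the end of round `r`, where `G r` is the round-`r`
communication graph (edges `G r q q'` mean `q` sends to `q'`). -/
def influence {n : ℕ} (G : ℕ → Fin n → Fin n → Prop) (p : Fin n) : ℕ → Set (Fin n)
  | 0 => {p}
  | r + 1 => influence G p r ∪ {q' | ∃ q ∈ influence G p r, G (r + 1) q q'}

/-- `E` is a directed tree on `Fin n` rooted at `root`, edges oriented away
from the root: every node is reachable from the root, every non-root node
has a unique parent, and the root has no parent. -/
def IsRootedTree {n : ℕ} (E : Fin n → Fin n → Prop) (root : Fin n) : Prop :=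
  (∀ v, Relation.ReflTransGen E root v) ∧
  (∀ v, v ≠ root → ∃! u, E u v) ∧
  (∀ u, ¬ E u root)

/-- A leaf of a directed graph: a node with no outgoing edge. -/
def IsLeaf {n : ℕ} (E : Fin n → Fin n → Prop) (v : Fin n) : Prop := ∀ w, ¬ E v w

/-- The successor relation of the chain `σ 0 → σ 1 → ⋯ → σ (n-1)`. -/
def chainEdge {n : ℕ} (σ : Fin n ≃ Fin n) (u v : Fin n) : Prop :=
  ∃ i j : Fin n, (j : ℕ) = (i : ℕ) + 1 ∧ u = σ i ∧ v = σ j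

/-- `E` is a directed chain (rooted path) on all `n` nodes. -/
def IsDirChain {n : ℕ} (E : Fin n → Fin n → Prop) : Prop :=
  ∃ σ : Fin n ≃ Fin n, ∀ u v, E u v ↔ chainEdge σ u v

/-- `E` is an undirected path on all `n` nodes (messages traverse edges in
both directions). -/
def IsUndirPath {n : ℕ} (E : Fin n → Fin n → Prop) : Prop :=
  ∃ σ : Fin n ≃ Fin n, ∀ u v, E u v ↔ (chainEdge σ u v ∨ chainEdge σ v u)

/-- The influence sets indexed by `I` cover `Π` at time `r`. -/
def isCovering {n : ℕ} (G : ℕ → Fin n → Fin n → Prop) (I : Set (Fin n)) (r : ℕ) : Prop :=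
  ⋃ p ∈ I, influence G p r = Set.univ

/-- A strict covering: no member can be removed. -/
def isStrictCovering {n : ℕ} (G : ℕ → Fin n → Fin n → Prop) (I : Set (Fin n)) (r : ℕ) : Prop :=
  isCovering G I r ∧ ∀ p ∈ I, ¬ isCovering G (I \ {p}) r

open Finset Relation

section RootedTree

variable {n : ℕ} {E : Fin n → Fin n → Prop} {root : Fin n}

theorem IsRootedTree.not_transGen_self (hE : IsRootedTree E root) (v : Fin n) :
    ¬ TransGen E v v := by
  induction hE.1 v with
  | refl =>
    intro h
    obtain ⟨b, -, hb⟩ := TransGen.tail'_iff.mp h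
    exact hE.2.2 b hb
  | @tail b c _ hbc ih =>
    intro h
    obtain ⟨b', hcb', hb'c⟩ := TransGen.tail'_iff.mp h
    obtain ⟨_, -, huniq⟩ := hE.2.1 c fun hc => hE.2.2 b (hc ▸ hbc)
    rw [(huniq b' hb'c).trans (huniq b hbc).symm] at hcb'
    exact ih (TransGen.head' hbc hcb')

theorem IsRootedTree.exists_isLeaf_reflTransGen (hE : IsRootedTree E root) (x : Fin n) :
    ∃ l, IsLeaf E l ∧ ReflTransGen E x l := by
  have hwf : WellFounded (flip (TransGen E)) := by
    have : IsTrans (Fin n) (flip (TransGen E)) := ⟨fun _ _ _ hab hbc => hbc.trans hab⟩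
    have : Std.Irrefl (flip (TransGen E)) := ⟨hE.not_transGen_self⟩
    exact Finite.wellFounded_of_trans_of_irrefl _
  induction x using hwf.induction with
  | _ x ih =>
    by_cases hx : IsLeaf E x
    · exact ⟨x, hx, .refl⟩
    · obtain ⟨y, hxy⟩ : ∃ y, E x y := by simpa [IsLeaf] using hx
      obtain ⟨l, hl, hyl⟩ := ih y (.single hxy)
      exact ⟨l, hl, .head hxy hyl⟩

theorem IsRootedTree.reflTransGen_or_reflTransGen (hE : IsRootedTree E root) {u v w : Fin n}
    (hu : ReflTransGen E u w) (hv : ReflTransGen E v w) :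
    ReflTransGen E u v ∨ ReflTransGen E v u := by
  induction hu with
  | refl => exact .inr hv
  | @tail b c hub hbc ih =>
    rcases hv.cases_tail with rfl | ⟨b', hvb', hb'c⟩
    · exact .inl (hub.tail hbc)
    · obtain ⟨_, -, huniq⟩ := hE.2.1 c fun hc => hE.2.2 b (hc ▸ hbc)
      rw [(huniq b' hb'c).trans (huniq b hbc).symm] at hvb'
      exact ih hvb'

end RootedTree

section Influence

variable {n : ℕ} (G : ℕ → Fin n → Fin n → Prop)

theorem influence_mono (p : Fin n) : Monotone (influence G p) :=
  monotone_nat_of_le_succ fun _ _ hx => Or.inl hx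

theorem mem_influence_self (p : Fin n) (r : ℕ) : p ∈ influence G p r :=
  influence_mono G p (Nat.zero_le r) rfl

variable {G}

theorem influence_eq_univ_of_le {p : Fin n} {r s : ℕ} (hrs : r ≤ s)
    (h : influence G p r = Set.univ) : influence G p s = Set.univ :=
  Set.eq_univ_of_univ_subset (h ▸ influence_mono G p hrs)

theorem ncard_influence_lt_succ {p : Fin n} {r : ℕ}
    (h : influence G p (r + 1) ≠ influence G p r) :
    (influence G p r).ncard < (influence G p (r + 1)).ncard :=
  Set.ncard_lt_ncard (ssubset_of_subset_of_ne (influence_mono G p r.le_succ) (Ne.symm h))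

theorem ncard_influence_lt {p : Fin n} {r : ℕ} (h : influence G p r ≠ Set.univ) :
    (influence G p r).ncard < n := by
  simpa using Set.ncard_lt_card h

theorem mem_influence_of_stalled {p x y : Fin n} {r : ℕ}
    (hstall : influence G p (r + 1) = influence G p r) (hx : x ∈ influence G p r)
    (hxy : ReflTransGen (G (r + 1)) x y) : y ∈ influence G p r := by
  induction hxy with
  | refl => exact hx
  | tail _ hbc ih => exact hstall ▸ Or.inr ⟨_, ih, hbc⟩

theorem IsRootedTree.influence_eq_univ_of_le_two {root : Fin n} {r : ℕ}
    (hE : IsRootedTree (G (r + 1)) root) (hn : n ≤ 2) : influence G root (r + 1) = Set.univ := by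
  refine Set.eq_univ_of_forall fun v => ?_
  by_cases hv : v = root
  · exact hv ▸ mem_influence_self G root (r + 1)
  obtain ⟨u, hu, -⟩ := hE.2.1 v hv
  have huv : u ≠ v := fun h => hE.not_transGen_self v (.single (h ▸ hu))
  have hur : u = root := by
    simp only [ne_eq, Fin.ext_iff] at hv huv ⊢
    omega
  exact Or.inr ⟨u, hur ▸ mem_influence_self G u r, hu⟩

end Influence

section Covering

variable {n : ℕ} {G : ℕ → Fin n → Fin n → Prop}

theorem isCovering_iff {I : Set (Fin n)} {r : ℕ} :
    isCovering G I r ↔ ∀ v, ∃ p ∈ I, v ∈ influence G p r := by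
  simp [isCovering, Set.eq_univ_iff_forall]

theorem isCovering.mono {I : Set (Fin n)} {r s : ℕ} (h : isCovering G I r) (hrs : r ≤ s) :
    isCovering G I s := by
  rw [isCovering_iff] at h ⊢
  intro v
  obtain ⟨p, hp, hv⟩ := h v
  exact ⟨p, hp, influence_mono G p hrs hv⟩

theorem exists_isStrictCovering_subset {r : ℕ} (I : Finset (Fin n)) (h : isCovering G I r) :
    ∃ J ⊆ I, isStrictCovering G J r := by
  induction I using Finset.strongInduction with
  | _ I ih =>
    by_cases hI : ∀ p ∈ I, ¬ isCovering G (↑I \ {p}) r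
    · exact ⟨I, subset_rfl, h, hI⟩
    push Not at hI
    obtain ⟨p, hp, hcov⟩ := hI
    rw [← coe_erase] at hcov
    obtain ⟨J, hJ, hJstrict⟩ := ih _ (erase_ssubset hp) hcov
    exact ⟨J, hJ.trans (erase_subset p I), hJstrict⟩

theorem isStrictCovering.exists_private {I : Set (Fin n)} {r : ℕ} {p : Fin n}
    (h : isStrictCovering G I r) (hp : p ∈ I) :
    ∃ x ∈ influence G p r, ∀ q ∈ I, q ≠ p → x ∉ influence G q r := by
  obtain ⟨x, hx⟩ : ∃ x, ∀ q ∈ I \ {p}, x ∉ influence G q r := by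
    simpa [isCovering_iff] using h.2 p hp
  obtain ⟨q, hq, hxq⟩ := isCovering_iff.mp h.1 x
  have hqp : q = p := by_contra fun hqp => hx q ⟨hq, hqp⟩ hxq
  exact ⟨x, hqp ▸ hxq, fun q hq hqp => hx q ⟨hq, hqp⟩⟩

end Covering

section Round

variable {n : ℕ} {G : ℕ → Fin n → Fin n → Prop} {root : Fin n} {r : ℕ}

/-- The member covering the root cannot stall: a stalled set containing the root is everything. -/
theorem IsRootedTree.exists_influence_succ_ne (hE : IsRootedTree (G (r + 1)) root)
    {I : Set (Fin n)} (hI : isCovering G I r)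
    (hfull : ∀ p, influence G p (r + 1) ≠ Set.univ) :
    ∃ p ∈ I, influence G p (r + 1) ≠ influence G p r := by
  obtain ⟨p, hp, hroot⟩ := isCovering_iff.mp hI root
  refine ⟨p, hp, fun hstall => hfull p ?_⟩
  rw [hstall]
  exact Set.eq_univ_of_forall fun v => mem_influence_of_stalled hstall hroot (hE.1 v)

/-- Send each stalled member to a leaf below one of its private points. This is injective: the
ancestors of a leaf form a chain, and a stalled set containing a point contains all its descendants,
so of two stalled members above the same leaf one would contain the other's private point. -/
theorem IsRootedTree.card_stalled_le (hE : IsRootedTree (G (r + 1)) root)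
    {I : Finset (Fin n)} (hI : isStrictCovering G I r) :
    #{p ∈ I | influence G p (r + 1) = influence G p r} ≤ {v | IsLeaf (G (r + 1)) v}.ncard := by
  set owns : Fin n → Fin n → Prop := fun p l => ∃ x ∈ influence G p r,
    (∀ q ∈ I, q ≠ p → x ∉ influence G q r) ∧ ReflTransGen (G (r + 1)) x l
  rw [Set.ncard_eq_toFinset_card _ (Set.toFinite _)]
  refine card_le_card_of_forall_subsingleton owns (fun p hp => ?_) (fun l _ => ?_)
  · obtain ⟨hpI, -⟩ := mem_filter.mp hp
    obtain ⟨x, hx, hpriv⟩ := hI.exists_private (mem_coe.mpr hpI)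
    obtain ⟨l, hl, hxl⟩ := hE.exists_isLeaf_reflTransGen x
    exact ⟨l, by simpa using hl, x, hx, hpriv, hxl⟩
  · rintro p ⟨hp, x, hx, hpriv, hxl⟩ p' ⟨hp', x', hx', hpriv', hx'l⟩
    obtain ⟨hpI, hstall⟩ := mem_filter.mp hp
    obtain ⟨hp'I, hstall'⟩ := mem_filter.mp hp'
    by_contra hne
    rcases hE.reflTransGen_or_reflTransGen hxl hx'l with hxx' | hx'x
    · exact hpriv' p hpI hne (mem_influence_of_stalled hstall hx hxx')
    · exact hpriv p' hp'I (Ne.symm hne) (mem_influence_of_stalled hstall' hx' hx'x)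

end Round

section Potential

variable {n : ℕ} (G : ℕ → Fin n → Fin n → Prop) (k : ℕ)

/-- While no influence set is full, this is the total size of the `k` smallest influence sets of
members of `I`, each of the `k - #I` missing ones (if `#I < k`) counting as `n - 1`. -/
noncomputable def potential (I : Finset (Fin n)) (r : ℕ) : ℕ :=
  {B ∈ I.powerset | #B ≤ k}.inf' ⟨∅, by simp⟩
    fun B => ∑ p ∈ B, (influence G p r).ncard + (k - #B) * (n - 1)

variable {G k}

theorem potential_le_of_subset {I B : Finset (Fin n)} {r : ℕ} (hBI : B ⊆ I) (hBk : #B ≤ k) :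
    potential G k I r ≤ ∑ p ∈ B, (influence G p r).ncard + (k - #B) * (n - 1) :=
  inf'_le _ (mem_filter.mpr ⟨mem_powerset.mpr hBI, hBk⟩)

theorem exists_subset_potential_eq (I : Finset (Fin n)) (r : ℕ) :
    ∃ B ⊆ I, #B ≤ k ∧
      potential G k I r = ∑ p ∈ B, (influence G p r).ncard + (k - #B) * (n - 1) := by
  obtain ⟨B, hB, hBmin⟩ := exists_mem_eq_inf' (⟨∅, by simp⟩ : {B ∈ I.powerset | #B ≤ k}.Nonempty)
    fun B => ∑ p ∈ B, (influence G p r).ncard + (k - #B) * (n - 1)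
  obtain ⟨hBI, hBk⟩ := mem_filter.mp hB
  exact ⟨B, mem_powerset.mp hBI, hBk, hBmin⟩

theorem potential_anti {I J : Finset (Fin n)} {r : ℕ} (hJI : J ⊆ I) :
    potential G k I r ≤ potential G k J r := by
  refine le_inf' _ _ fun B hB => ?_
  obtain ⟨hBJ, hBk⟩ := mem_filter.mp hB
  exact potential_le_of_subset ((mem_powerset.mp hBJ).trans hJI) hBk

theorem potential_le (I : Finset (Fin n)) (r : ℕ) : potential G k I r ≤ k * (n - 1) := by
  simpa using potential_le_of_subset (G := G) (k := k) (r := r) (empty_subset I) (Nat.zero_le k)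

theorem le_potential {I : Finset (Fin n)} {r m : ℕ} (hm : m ≤ n - 1)
    (hsz : ∀ p ∈ I, m ≤ (influence G p r).ncard) : k * m ≤ potential G k I r := by
  refine le_inf' _ _ fun B hB => ?_
  obtain ⟨hBI, hBk⟩ := mem_filter.mp hB
  calc k * m = #B * m + (k - #B) * m := by rw [← add_mul, Nat.add_sub_cancel' hBk]
    _ ≤ ∑ p ∈ B, (influence G p r).ncard + (k - #B) * (n - 1) :=
      add_le_add (by simpa using card_nsmul_le_sum B _ m fun p hp => hsz p (mem_powerset.mp hBI hp))
        (Nat.mul_le_mul_left _ hm)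

theorem potential_lt_potential_succ {I : Finset (Fin n)} {r : ℕ}
    (hstalled : #{p ∈ I | influence G p (r + 1) = influence G p r} < k)
    (hgrow : ∃ p ∈ I, influence G p (r + 1) ≠ influence G p r)
    (hfull : ∀ p, influence G p (r + 1) ≠ Set.univ) :
    potential G k I r < potential G k I (r + 1) := by
  obtain ⟨B, hBI, hBk, hBmin⟩ := exists_subset_potential_eq (G := G) I (r + 1)
  rw [hBmin]
  by_cases hBgrow : ∃ p ∈ B, influence G p (r + 1) ≠ influence G p r
  · obtain ⟨p, hpB, hp⟩ := hBgrow
    have hsum : ∑ q ∈ B, (influence G q r).ncard < ∑ q ∈ B, (influence G q (r + 1)).ncard :=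
      sum_lt_sum (fun q _ => Set.ncard_le_ncard (influence_mono G q r.le_succ))
        ⟨p, hpB, ncard_influence_lt_succ hp⟩
    exact (potential_le_of_subset hBI hBk).trans_lt (by omega)
  · -- all of `B` stalls, so `#B < k` and a growing member of `I` can be added to `B`
    push Not at hBgrow
    have hBstalled : B ⊆ {p ∈ I | influence G p (r + 1) = influence G p r} :=
      fun p hp => mem_filter.mpr ⟨hBI hp, hBgrow p hp⟩
    have hBk' : #B < k := (card_le_card hBstalled).trans_lt hstalled
    obtain ⟨q, hqI, hq⟩ := hgrow
    have hqB : q ∉ B := fun h => hq (hBgrow q h)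
    have hsum : ∑ p ∈ B, (influence G p (r + 1)).ncard = ∑ p ∈ B, (influence G p r).ncard :=
      sum_congr rfl fun p hp => by rw [hBgrow p hp]
    have hqlt := ncard_influence_lt_succ hq
    have hqle := ncard_influence_lt (hfull q)
    have hpad : (k - #B) * (n - 1) = (k - (#B + 1)) * (n - 1) + (n - 1) := by
      rw [← add_one_mul]
      congr 1
      omega
    calc potential G k I r
        ≤ ∑ p ∈ insert q B, (influence G p r).ncard + (k - #(insert q B)) * (n - 1) :=
          potential_le_of_subset (insert_subset hqI hBI) (by rw [card_insert_of_notMem hqB]; omega)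
      _ < _ := by rw [sum_insert hqB, card_insert_of_notMem hqB, hsum, hpad]; omega

end Potential

section Dissemination

variable {n : ℕ} {G : ℕ → Fin n → Fin n → Prop} {root : Fin n} {r : ℕ}

theorem IsRootedTree.two_le_ncard_influence (hE : IsRootedTree (G (r + 1)) root) {p : Fin n}
    (hp : ¬ IsLeaf (G (r + 1)) p) : 2 ≤ (influence G p (r + 1)).ncard := by
  obtain ⟨c, hc⟩ : ∃ c, G (r + 1) p c := by simpa [IsLeaf] using hp
  have hcp : p ≠ c := fun h => hE.not_transGen_self p (.single (h ▸ hc))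
  have hsub : {p, c} ⊆ influence G p (r + 1) := by
    rintro x (rfl | rfl)
    · exact mem_influence_self G x (r + 1)
    · exact Or.inr ⟨p, mem_influence_self G p r, hc⟩
  exact Set.ncard_pair hcp ▸ Set.ncard_le_ncard hsub

theorem IsRootedTree.isCovering_not_isLeaf (hE : IsRootedTree (G (r + 1)) root) (hn : 2 ≤ n) :
    isCovering G {p | ¬ IsLeaf (G (r + 1)) p} (r + 1) := by
  refine isCovering_iff.mpr fun v => ?_
  by_cases hv : v = root
  · have : Nontrivial (Fin n) := Fin.nontrivial_iff_two_le.mpr hn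
    obtain ⟨w, hw⟩ := exists_ne root
    rcases (hE.1 w).cases_head with h | ⟨c, hc, -⟩
    · exact absurd h.symm hw
    · exact ⟨root, fun h => h c hc, hv ▸ mem_influence_self G root (r + 1)⟩
  · obtain ⟨u, hu, -⟩ := hE.2.1 v hv
    exact ⟨u, fun h => h v hu, Or.inr ⟨u, mem_influence_self G u r, hu⟩⟩

theorem IsRootedTree.exists_isStrictCovering_two_le (hE : IsRootedTree (G (r + 1)) root)
    (hn : 2 ≤ n) :
    ∃ I : Finset (Fin n), isStrictCovering G I (r + 1) ∧
      ∀ p ∈ I, 2 ≤ (influence G p (r + 1)).ncard := by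
  classical
  obtain ⟨I, hIleaf, hI⟩ := exists_isStrictCovering_subset {p | ¬ IsLeaf (G (r + 1)) p}
    (by simpa using hE.isCovering_not_isLeaf hn)
  exact ⟨I, hI, fun p hp => hE.two_le_ncard_influence (mem_filter.mp (hIleaf hp)).2⟩

theorem exists_isStrictCovering_le_potential {k T : ℕ} (hn : 3 ≤ n)
    (htree : ∀ r, ∃ root, IsRootedTree (G (r + 1)) root ∧ {v | IsLeaf (G (r + 1)) v}.ncard < k)
    (hfull : ∀ p, influence G p T ≠ Set.univ) :
    ∀ t, 1 ≤ t → t ≤ T →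
      ∃ I : Finset (Fin n), isStrictCovering G I t ∧ 2 * k + (t - 1) ≤ potential G k I t := by
  intro t ht
  induction t, ht using Nat.le_induction with
  | base =>
    intro _
    obtain ⟨root, hE, -⟩ := htree 0
    obtain ⟨I, hI, hsz⟩ := hE.exists_isStrictCovering_two_le (by omega)
    exact ⟨I, hI, by simpa [mul_comm] using le_potential (k := k) (by omega) hsz⟩
  | succ t ht ih =>
    intro htT
    obtain ⟨I, hI, hpot⟩ := ih (by omega)
    obtain ⟨root, hE, hleaves⟩ := htree t
    have hfull' : ∀ p, influence G p (t + 1) ≠ Set.univ :=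
      fun p h => hfull p (influence_eq_univ_of_le htT h)
    obtain ⟨J, hJI, hJ⟩ := exists_isStrictCovering_subset I (hI.1.mono t.le_succ)
    have hgrow : potential G k I t < potential G k I (t + 1) :=
      potential_lt_potential_succ ((hE.card_stalled_le hI).trans_lt hleaves)
        (hE.exists_influence_succ_ne hI.1 hfull') hfull'
    have hshrink := potential_anti (G := G) (k := k) (r := t + 1) hJI
    exact ⟨J, hJ, by omega⟩

end Dissemination

/-- for rooted trees with exactly `k-1` leaves, dissemination
completes within `k(n-3)+2` rounds. -/
theorem dissemination_trees_k_minus_one_leaves {n k : ℕ}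
    (G : ℕ → Fin n → Fin n → Prop)
    (htree : ∀ r, 1 ≤ r → ∃ root, IsRootedTree (G r) root ∧
      {v | IsLeaf (G r) v}.ncard = k - 1) :
    ∃ p : Fin n, influence G p (k * (n - 3) + 2) = Set.univ := by
  obtain ⟨root, hE, -⟩ := htree 1 le_rfl
  rcases le_or_gt n 2 with hn | hn
  · exact ⟨root, influence_eq_univ_of_le (by omega) (hE.influence_eq_univ_of_le_two hn)⟩
  have hfew : ∀ r, ∃ root, IsRootedTree (G (r + 1)) root ∧
      {v | IsLeaf (G (r + 1)) v}.ncard < k := by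
    intro r
    obtain ⟨root, hE, hleaves⟩ := htree (r + 1) r.succ_pos
    obtain ⟨l, hl, -⟩ := hE.exists_isLeaf_reflTransGen root
    have hleaves_pos := (Set.ncard_pos (Set.toFinite {v | IsLeaf (G (r + 1)) v})).mpr ⟨l, hl⟩
    exact ⟨root, hE, by omega⟩
  by_contra! hfull
  obtain ⟨I, -, hI⟩ := exists_isStrictCovering_le_potential hn hfew hfull _ (by omega) le_rfl
  have hbound := potential_le (G := G) (k := k) I (k * (n - 3) + 2)
  have hpad : k * (n - 1) = k * (n - 3) + 2 * k := by
    rw [show n - 1 = n - 3 + 2 by omega]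
    ring
  omega
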